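/- Fix X ∈ ℝ^{n×p} and let Λ be a finite set of positive reals with minimum element λ_min and maximum element λ_max := max_{2≤j≤p}|X_jᵀX₁|/n. For each λ ∈ Λ let γ̂(λ) be a node-wise Lasso solution with parameter λ, with τ̃²(λ) := (1/n)‖X₁ − X₋₁γ̂(λ)‖² > 0, τ̂²(λ) := τ̃²(λ) + λ‖γ̂(λ)‖₁, Θ̂₁(λ) := (1/τ̂²(λ))(1, −γ̂(λ)ᵀ)ᵀ, Ω̂₁,₁(λ) := Θ̂₁(λ)ᵀΣ̂Θ̂₁(λ), and f(λ) := ‖Σ̂Θ̂₁(λ) − e₁‖_∞/Ω̂₁,₁(λ)^{1/2}. Assume λ ↦ τ̃²(λ) is nondecreasing on Λ and γ̂(λ_max) = 0. Let η* := τ̃(λ_CV)/√n for some λ_CV ∈ Λ, and define λ₁ by the STPS rule: if f(λ) > η* for all λ ∈ Λ set λ₁ := λ_min; otherwise set λ* := argmin{Ω̂₁,₁(λ)^{1/2} : λ ∈ Λ, f(λ) ≤ η*}, Ω* := 1.1·Ω̂₁,₁(λ*)^{1/2}, λ₁ := argmin{f(λ) : λ ∈ Λ, Ω̂₁,₁(λ)^{1/2}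 ≤ Ω*}. Then f(λ₁) ≤ max{ λ_min/τ̃(λ_min), (1/√n)·((1/n)‖X₁‖²)^{1/2} }. -/

import Mathlib

open MeasureTheory ProbabilityTheory Filter Finset Matrix Topology

noncomputable section

/-- Squared Euclidean norm of a vector in `ℝ^m`. -/
def sqNorm {m : ℕ} (v : Fin m → ℝ) : ℝ := ∑ i, (v i) ^ 2

/-- ℓ¹ norm of a vector in `ℝ^m`. -/
def l1Norm {m : ℕ} (v : Fin m → ℝ) : ℝ := ∑ i, |v i|

/-- ℓ^∞ norm (maximum absolute entry) of a vector in `ℝ^m`. -/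
def supNorm {m : ℕ} (v : Fin m → ℝ) : ℝ := ⨆ i, |v i|

/-- First entry of a vector (0 if the vector is empty). -/
def fstEntry {P : ℕ} (v : Fin P → ℝ) : ℝ := if h : 0 < P then v ⟨0, h⟩ else 0

/-- Index of the (j+2)-nd column, as an element of `Fin P`, for `j : Fin (P-1)`. -/
def colIdx {P : ℕ} (j : Fin (P - 1)) : Fin P := ⟨j.1 + 1, by have := j.isLt; omega⟩

/-- First column of the design matrix `X` (rows indexed by `Fin n`, columns by `Fin P`). -/
def col0 {n P : ℕ} (X : Fin n → Fin P → ℝ) : Fin n → ℝ := fun i => fstEntry (X i)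

/-- Residual `X₁ - X₋₁ γ` of the node-wise regression of the first column on the others. -/
def nwRes {n P : ℕ} (X : Fin n → Fin P → ℝ) (g : Fin (P - 1) → ℝ) : Fin n → ℝ :=
  fun i => col0 X i - ∑ j : Fin (P - 1), X i (colIdx j) * g j

/-- Node-wise Lasso objective `(1/n)‖X₁ - X₋₁γ‖² + 2λ‖γ‖₁`. -/
def nwObj {n P : ℕ} (X : Fin n → Fin P → ℝ) (lam : ℝ) (g : Fin (P - 1) → ℝ) : ℝ :=
  (1 / n) * sqNorm (nwRes X g) + 2 * lam * l1Norm g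

/-- `g` is a node-wise Lasso solution with tuning parameter `lam`. -/
def IsNodewiseSol {n P : ℕ} (X : Fin n → Fin P → ℝ) (lam : ℝ) (g : Fin (P - 1) → ℝ) : Prop :=
  ∀ γ : Fin (P - 1) → ℝ, nwObj X lam g ≤ nwObj X lam γ

/-- `τ̃² := (1/n)‖X₁ - X₋₁γ̂‖²`. -/
def tauTildeSq {n P : ℕ} (X : Fin n → Fin P → ℝ) (g : Fin (P - 1) → ℝ) : ℝ :=
  (1 / n) * sqNorm (nwRes X g)

/-- `τ̂² := τ̃² + λ‖γ̂‖₁`. -/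
def tauHatSq {n P : ℕ} (X : Fin n → Fin P → ℝ) (lam : ℝ) (g : Fin (P - 1) → ℝ) : ℝ :=
  tauTildeSq X g + lam * l1Norm g

/-- `Θ̂₁ := (1/τ̂²)(1, -γ̂ᵀ)ᵀ ∈ ℝ^P`. -/
def thetaHat {n P : ℕ} (X : Fin n → Fin P → ℝ) (lam : ℝ) (g : Fin (P - 1) → ℝ) :
    Fin P → ℝ :=
  fun j =>
    if h : j.1 = 0 then 1 / tauHatSq X lam g
    else -(g ⟨j.1 - 1, by have := j.isLt; omega⟩) / tauHatSq X lam g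

/-- Sample covariance matrix `Σ̂ := XᵀX/n`. -/
def sigmaHat {n P : ℕ} (X : Fin n → Fin P → ℝ) : Fin P → Fin P → ℝ :=
  fun j k => (1 / n) * ∑ i, X i j * X i k

/-- The vector `Σ̂Θ̂₁ - e₁`. -/
def biasVec {n P : ℕ} (X : Fin n → Fin P → ℝ) (lam : ℝ) (g : Fin (P - 1) → ℝ) :
    Fin P → ℝ :=
  fun j => (∑ k, sigmaHat X j k * thetaHat X lam g k) - (if j.1 = 0 then 1 else 0)

/-- `Ω̂₁,₁ := Θ̂₁ᵀ Σ̂ Θ̂₁`. -/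
def omegaHat {n P : ℕ} (X : Fin n → Fin P → ℝ) (lam : ℝ) (g : Fin (P - 1) → ℝ) : ℝ :=
  ∑ j, ∑ k, thetaHat X lam g j * sigmaHat X j k * thetaHat X lam g k

/-- Bias factor `f(λ) := ‖Σ̂Θ̂₁ - e₁‖_∞ / Ω̂₁,₁^{1/2}`. -/
def biasFactor {n P : ℕ} (X : Fin n → Fin P → ℝ) (lam : ℝ) (g : Fin (P - 1) → ℝ) : ℝ :=
  supNorm (biasVec X lam g) / Real.sqrt (omegaHat X lam g)

/-- Restricted maximum eigenvalue `φ_max(s)` of the sample covariance of `X`. -/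
def phiMax {n P : ℕ} (X : Fin n → Fin P → ℝ) (s : ℕ) : ℝ :=
  sSup {r : ℝ | ∃ z : Fin P → ℝ, z ≠ 0 ∧ {j : Fin P | z j ≠ 0}.ncard ≤ s ∧
    r = sqNorm (fun i => ∑ j, X i j * z j) / (n * sqNorm z)}

/-- Restricted minimum eigenvalue `φ_min(s)` of the sample covariance of `X`. -/
def phiMin {n P : ℕ} (X : Fin n → Fin P → ℝ) (s : ℕ) : ℝ :=
  sInf {r : ℝ | ∃ z : Fin P → ℝ, z ≠ 0 ∧ {j : Fin P | z j ≠ 0}.ncard ≤ s ∧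
    r = sqNorm (fun i => ∑ j, X i j * z j) / (n * sqNorm z)}

/-- Restricted eigenvalue `κ(s,c₀)²` of Bickel–Ritov–Tsybakov. -/
def kappaSq {n P : ℕ} (X : Fin n → Fin P → ℝ) (s : ℕ) (c0 : ℝ) : ℝ :=
  sInf {r : ℝ | ∃ S : Finset (Fin P), S.card ≤ s ∧ ∃ z : Fin P → ℝ, z ≠ 0 ∧
    (∑ j ∈ Sᶜ, |z j|) ≤ c0 * ∑ j ∈ S, |z j| ∧
    r = sqNorm (fun i => ∑ j, X i j * z j) / (n * ∑ j ∈ S, (z j) ^ 2)}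

/-- The columns of `X` are in general position. -/
def InGeneralPosition {n P : ℕ} (X : Fin n → Fin P → ℝ) : Prop :=
  ∀ k : ℕ, k < min n P → ∀ ι : Fin (k + 1) → Fin P, Function.Injective ι →
    ∀ σ : Fin (k + 1) → ℝ, (∀ l, σ l = 1 ∨ σ l = -1) →
      ∀ i : Fin P, i ∉ Set.range ι → ∀ s : ℝ, s = 1 ∨ s = -1 →
        (s • fun r => X r i) ∉
          affineSpan ℝ (Set.range fun l => σ l • fun r => X r (ι l))

/-- `b` is a Lasso solution for response `Y`, design `X`, tuning parameter `lam`. -/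
def IsLassoSol {n P : ℕ} (X : Fin n → Fin P → ℝ) (Y : Fin n → ℝ) (lam : ℝ)
    (b : Fin P → ℝ) : Prop :=
  ∀ β : Fin P → ℝ,
    (1 / n) * sqNorm (fun i => Y i - ∑ j, X i j * b j) + 2 * lam * l1Norm b ≤
      (1 / n) * sqNorm (fun i => Y i - ∑ j, X i j * β j) + 2 * lam * l1Norm β

/-- The debiased Lasso `b̂₁ := β̂₁ + (1/n)Θ̂₁ᵀXᵀ(Y - Xβ̂)`. -/
def debiasedLasso {n P : ℕ} (X : Fin n → Fin P → ℝ) (Y : Fin n → ℝ)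
    (Theta : Fin P → ℝ) (bh : Fin P → ℝ) : ℝ :=
  fstEntry bh + (1 / n) * ∑ j, Theta j * ∑ i, X i j * (Y i - ∑ k, X i k * bh k)

/-- `W₁ := (1/√n)Θ̂₁ᵀXᵀε`. -/
def W1 {n P : ℕ} (X : Fin n → Fin P → ℝ) (Theta : Fin P → ℝ) (e : Fin n → ℝ) : ℝ :=
  (1 / Real.sqrt n) * ∑ j, Theta j * ∑ i, X i j * e i

/-- `Δ₁ := √n (Σ̂Θ̂₁ - e₁)ᵀ(β₀ - β̂)`. -/
def Delta1 {n P : ℕ} (X : Fin n → Fin P → ℝ) (Theta : Fin P → ℝ)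
    (b0 bh : Fin P → ℝ) : ℝ :=
  Real.sqrt n * ∑ j, ((∑ k, sigmaHat X j k * Theta k) - (if j.1 = 0 then 1 else 0)) *
    (b0 j - bh j)

/-- Standard normal cumulative distribution function. -/
def gaussCdf (z : ℝ) : ℝ := ((gaussianReal 0 1) (Set.Iic z)).toReal

/-! For a node-wise Lasso solution the KKT conditions say that every column of `X₋₁` has
correlation at most `λ` with the residual `X₁ - X₋₁γ̂`, with `γ̂ⱼ · corrⱼ = λ|γ̂ⱼ|`. Summing the
latter gives `X₁ᵀ(X₁ - X₋₁γ̂)/n = τ̂²`, so `Σ̂Θ̂₁ - e₁` vanishes in its first entry and is at most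
`λ/τ̂²` elsewhere, while `Ω̂₁,₁ = τ̃²/τ̂⁴`; hence `f(λ) ≤ λ/τ̃(λ)`, which settles the case
`λ₁ = λ_min`. Otherwise `f(λ₁) ≤ f(λ*) ≤ η*`, and `η* ≤ τ̃(λ_max)/√n = ‖X₁‖/n` because `τ̃²` is
nondecreasing on `Λ` and `γ̂(λ_max) = 0`. -/

lemma sum_eq_add_sum_colIdx {p : ℕ} (hp : 0 < p) (F : Fin p → ℝ) :
    ∑ k, F k = F ⟨0, hp⟩ + ∑ j : Fin (p - 1), F (colIdx j) := by
  obtain ⟨q, rfl⟩ : ∃ q, p = q + 1 := ⟨p - 1, by omega⟩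
  exact Fin.sum_univ_succ F

def nwCorr {n p : ℕ} (X : Fin n → Fin p → ℝ) (g : Fin (p - 1) → ℝ) (j : Fin (p - 1)) : ℝ :=
  (1 / n) * ∑ i, X i (colIdx j) * nwRes X g i

lemma nwRes_add_single {n p : ℕ} (X : Fin n → Fin p → ℝ) (g : Fin (p - 1) → ℝ)
    (j : Fin (p - 1)) (t : ℝ) :
    nwRes X (g + Pi.single j t) = fun i => nwRes X g i - t * X i (colIdx j) := by
  ext i
  simp only [nwRes, Pi.add_apply, mul_add, sum_add_distrib, Pi.single_apply, mul_ite, mul_zero,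
    sum_ite_eq', mem_univ, if_true]
  ring

lemma l1Norm_add_single {m : ℕ} (g : Fin m → ℝ) (j : Fin m) (t : ℝ) :
    l1Norm (g + Pi.single j t) = l1Norm g + (|g j + t| - |g j|) := by
  rw [← sub_eq_iff_eq_add', l1Norm, l1Norm, ← sum_sub_distrib, Fintype.sum_eq_single j]
  · simp
  · intro k hk
    simp [hk]

lemma sqNorm_sub_smul {m : ℕ} (r x : Fin m → ℝ) (t : ℝ) :
    sqNorm (fun i => r i - t * x i) = sqNorm r - 2 * t * ∑ i, x i * r i + t ^ 2 * sqNorm x := by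
  simp only [sqNorm, mul_sum, ← sum_sub_distrib, ← sum_add_distrib]
  exact sum_congr rfl fun i _ => by ring

lemma nwObj_add_single {n p : ℕ} (X : Fin n → Fin p → ℝ) (lam : ℝ) (g : Fin (p - 1) → ℝ)
    (j : Fin (p - 1)) (t : ℝ) :
    nwObj X lam (g + Pi.single j t) = nwObj X lam g +
      ((1 / n) * sqNorm (fun i => X i (colIdx j)) * t ^ 2 - 2 * nwCorr X g j * t
        + 2 * lam * (|g j + t| - |g j|)) := by
  rw [nwObj, nwObj, nwRes_add_single, sqNorm_sub_smul, l1Norm_add_single, nwCorr]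
  ring

lemma nonneg_of_forall_mul_add_nonneg {c d : ℝ} (h : ∀ u, 0 < u → u < 1 → 0 ≤ c * u + d) :
    0 ≤ d := by
  have hlim : Tendsto (fun u => c * u + d) (𝓝[>] 0) (𝓝 d) :=
    (Continuous.tendsto' (by fun_prop) 0 d (by simp)).mono_left nhdsWithin_le_nhds
  refine ge_of_tendsto hlim ?_
  filter_upwards [Ioo_mem_nhdsGT (zero_lt_one' ℝ)] with u hu using h u hu.1 hu.2

lemma abs_le_and_mul_eq_of_forall_nonneg {a b c lam : ℝ} (hlam : 0 ≤ lam)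
    (h : ∀ t, 0 ≤ c * t ^ 2 - 2 * a * t + 2 * lam * (|b + t| - |b|)) :
    |a| ≤ lam ∧ b * a = lam * |b| := by
  have hup : 0 ≤ 2 * (lam - a) := nonneg_of_forall_mul_add_nonneg (c := c) fun u hu _ => by
    have := h u
    have : |b + u| - |b| ≤ u := by linarith [abs_add_le b u, abs_of_pos hu]
    nlinarith
  have hlow : 0 ≤ 2 * (lam + a) := nonneg_of_forall_mul_add_nonneg (c := c) fun u hu _ => by
    have := h (-u)
    have : |b + -u| - |b| ≤ u := by linarith [abs_add_le b (-u), abs_neg u, abs_of_pos hu]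
    nlinarith
  have habs : |a| ≤ lam := abs_le.2 ⟨by linarith, by linarith⟩
  -- moving `b` towards `0` lowers the penalty at exactly the rate `lam * |b|`
  have hshrink : 0 ≤ 2 * (a * b - lam * |b|) :=
    nonneg_of_forall_mul_add_nonneg (c := c * b ^ 2) fun u hu hu1 => by
      have := h (-(u * b))
      have : |b + -(u * b)| = (1 - u) * |b| := by
        rw [show b + -(u * b) = (1 - u) * b by ring, abs_mul, abs_of_pos (by linarith)]
      nlinarith
  have : b * a ≤ lam * |b| := by
    calc b * a ≤ |b| * |a| := by rw [← abs_mul]; exact le_abs_self _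
      _ ≤ |b| * lam := by gcongr
      _ = lam * |b| := mul_comm _ _
  exact ⟨habs, by linarith⟩

section Nodewise

variable {n p : ℕ} {X : Fin n → Fin p → ℝ} {lam : ℝ} {g : Fin (p - 1) → ℝ}

theorem IsNodewiseSol.kkt (hlam : 0 ≤ lam) (hg : IsNodewiseSol X lam g) (j : Fin (p - 1)) :
    |nwCorr X g j| ≤ lam ∧ g j * nwCorr X g j = lam * |g j| :=
  abs_le_and_mul_eq_of_forall_nonneg (c := (1 / n) * sqNorm fun i => X i (colIdx j)) hlam
    fun t => by
      have := hg (g + Pi.single j t)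
      rw [nwObj_add_single] at this
      linarith

lemma col0_apply (hp : 0 < p) (i : Fin n) : col0 X i = X i ⟨0, hp⟩ := dif_pos hp

lemma thetaHat_zero (hp : 0 < p) : thetaHat X lam g ⟨0, hp⟩ = 1 / tauHatSq X lam g := rfl

lemma thetaHat_colIdx (j : Fin (p - 1)) : thetaHat X lam g (colIdx j) = -g j / tauHatSq X lam g :=
  rfl

lemma sum_mul_thetaHat (hp : 0 < p) (i : Fin n) :
    ∑ k, X i k * thetaHat X lam g k = nwRes X g i / tauHatSq X lam g := by
  rw [sum_eq_add_sum_colIdx hp, thetaHat_zero, nwRes, col0_apply hp, sub_div, sub_eq_add_neg,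
    sum_div, ← sum_neg_distrib]
  simp only [thetaHat_colIdx]
  congr 1
  · ring
  · exact sum_congr rfl fun j _ => by ring

lemma sum_sigmaHat_mul_thetaHat (hp : 0 < p) (k : Fin p) :
    ∑ l, sigmaHat X k l * thetaHat X lam g l =
      (1 / n) * ∑ i, X i k * nwRes X g i / tauHatSq X lam g := by
  calc ∑ l, sigmaHat X k l * thetaHat X lam g l
      = (1 / n) * ∑ i, X i k * ∑ l, X i l * thetaHat X lam g l := by
        simp only [sigmaHat, mul_sum, sum_mul, mul_assoc]
        exact sum_comm
    _ = _ := by simp only [sum_mul_thetaHat hp, mul_div_assoc, mul_sum]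

lemma sum_col0_mul_nwRes_eq_tauTildeSq_add :
    (1 / n) * ∑ i, col0 X i * nwRes X g i = tauTildeSq X g + ∑ j, g j * nwCorr X g j := by
  have hcol0 : ∀ i, col0 X i = nwRes X g i + ∑ j, X i (colIdx j) * g j := fun i => by
    simp [nwRes]
  simp only [hcol0, add_mul, sum_add_distrib, mul_add, tauTildeSq, sqNorm, nwCorr, sq, sum_mul,
    mul_sum]
  rw [sum_comm]
  congr 1
  exact sum_congr rfl fun j _ => sum_congr rfl fun i _ => by ring

theorem IsNodewiseSol.sum_col0_mul_nwRes_eq_tauHatSq (hlam : 0 ≤ lam)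
    (hg : IsNodewiseSol X lam g) :
    (1 / n) * ∑ i, col0 X i * nwRes X g i = tauHatSq X lam g := by
  rw [sum_col0_mul_nwRes_eq_tauTildeSq_add, tauHatSq, l1Norm, mul_sum]
  exact congrArg _ (sum_congr rfl fun j _ => (hg.kkt hlam j).2)

lemma omegaHat_eq (hp : 0 < p) :
    omegaHat X lam g = tauTildeSq X g / tauHatSq X lam g ^ 2 := by
  calc omegaHat X lam g
      = ∑ k, thetaHat X lam g k * ∑ l, sigmaHat X k l * thetaHat X lam g l := by
        simp only [omegaHat, mul_sum, mul_assoc]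
    _ = ∑ i, (1 / n) * nwRes X g i * (∑ k, X i k * thetaHat X lam g k) / tauHatSq X lam g := by
        simp only [sum_sigmaHat_mul_thetaHat hp, mul_sum, sum_div]
        rw [sum_comm]
        exact sum_congr rfl fun i _ => sum_congr rfl fun k _ => by ring
    _ = _ := by
        simp only [sum_mul_thetaHat hp, tauTildeSq, sqNorm, mul_sum, sum_div]
        exact sum_congr rfl fun i _ => by ring

lemma eq_zero_or_eq_colIdx (k : Fin p) : (k : ℕ) = 0 ∨ ∃ j : Fin (p - 1), k = colIdx j := by
  rcases k with ⟨_ | m, hm⟩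
  · exact Or.inl rfl
  · exact Or.inr ⟨⟨m, by omega⟩, rfl⟩

theorem IsNodewiseSol.abs_biasVec_le (hp : 0 < p) (hlam : 0 ≤ lam) (hg : IsNodewiseSol X lam g)
    (hT : 0 < tauHatSq X lam g) (k : Fin p) :
    |biasVec X lam g k| ≤ lam / tauHatSq X lam g := by
  rcases eq_zero_or_eq_colIdx k with hk | ⟨j, rfl⟩
  · obtain rfl : k = ⟨0, hp⟩ := Fin.ext hk
    have h0 : biasVec X lam g ⟨0, hp⟩ = 0 := by
      simp only [biasVec, sum_sigmaHat_mul_thetaHat hp, ← col0_apply hp, ← mul_div_assoc,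
        ← sum_div, hg.sum_col0_mul_nwRes_eq_tauHatSq hlam, div_self hT.ne', ↓reduceIte, sub_self]
    rw [h0, abs_zero]
    positivity
  · have hj : biasVec X lam g (colIdx j) = nwCorr X g j / tauHatSq X lam g := by
      simp only [biasVec, sum_sigmaHat_mul_thetaHat hp, nwCorr, colIdx, Nat.succ_ne_zero,
        if_false, sub_zero, mul_div_assoc, sum_div]
    rw [hj, abs_div, abs_of_pos hT]
    gcongr
    exact (hg.kkt hlam j).1

theorem IsNodewiseSol.biasFactor_le (hp : 0 < p) (hlam : 0 ≤ lam) (hg : IsNodewiseSol X lam g)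
    (hτ : 0 < tauTildeSq X g) :
    biasFactor X lam g ≤ lam / Real.sqrt (tauTildeSq X g) := by
  have hT : 0 < tauHatSq X lam g := by
    have : 0 ≤ lam * l1Norm g := mul_nonneg hlam (sum_nonneg fun j _ => abs_nonneg _)
    rw [tauHatSq]
    linarith
  have hsup : supNorm (biasVec X lam g) ≤ lam / tauHatSq X lam g :=
    Real.iSup_le (hg.abs_biasVec_le hp hlam hT) (by positivity)
  have hτ' : 0 < Real.sqrt (tauTildeSq X g) := Real.sqrt_pos.2 hτ
  calc biasFactor X lam g
      = supNorm (biasVec X lam g) / (Real.sqrt (tauTildeSq X g) / tauHatSq X lam g) := by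
        rw [biasFactor, omegaHat_eq hp, Real.sqrt_div hτ.le, Real.sqrt_sq hT.le]
    _ ≤ lam / tauHatSq X lam g / (Real.sqrt (tauTildeSq X g) / tauHatSq X lam g) := by gcongr
    _ = lam / Real.sqrt (tauTildeSq X g) := by field_simp

lemma tauTildeSq_zero :
    tauTildeSq X 0 = (1 / n) * sqNorm (col0 X) := by
  rw [tauTildeSq]
  congr 2
  ext i
  simp [nwRes]

end Nodewise

theorem statement16_general (n p : ℕ) (hp : 2 ≤ p)
    (X : Fin n → Fin p → ℝ)
    (Λ : Finset ℝ) (hΛne : Λ.Nonempty) (hΛpos : ∀ l ∈ Λ, 0 < l)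
    (ghat : ℝ → Fin (p - 1) → ℝ)
    (hsol : ∀ l ∈ Λ, IsNodewiseSol X l (ghat l))
    (hτpos : ∀ l ∈ Λ, 0 < tauTildeSq X (ghat l))
    (hmono : ∀ l ∈ Λ, ∀ m ∈ Λ, l ≤ m →
      tauTildeSq X (ghat l) ≤ tauTildeSq X (ghat m))
    (hzero : ghat (Λ.max' hΛne) = 0)
    (lamCV : ℝ) (hCV : lamCV ∈ Λ)
    (lam1 : ℝ)
    (hrule :
      ((∀ l ∈ Λ, Real.sqrt (tauTildeSq X (ghat lamCV)) / Real.sqrt n <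
          biasFactor X l (ghat l)) ∧ lam1 = Λ.min' hΛne) ∨
      (∃ ls ∈ Λ,
        biasFactor X ls (ghat ls) ≤
          Real.sqrt (tauTildeSq X (ghat lamCV)) / Real.sqrt n ∧
        (∀ l ∈ Λ,
          biasFactor X l (ghat l) ≤
            Real.sqrt (tauTildeSq X (ghat lamCV)) / Real.sqrt n →
          Real.sqrt (omegaHat X ls (ghat ls)) ≤ Real.sqrt (omegaHat X l (ghat l))) ∧
        lam1 ∈ Λ ∧
        Real.sqrt (omegaHat X lam1 (ghat lam1)) ≤
          1.1 * Real.sqrt (omegaHat X ls (ghat ls)) ∧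
        (∀ l ∈ Λ,
          Real.sqrt (omegaHat X l (ghat l)) ≤
            1.1 * Real.sqrt (omegaHat X ls (ghat ls)) →
          biasFactor X lam1 (ghat lam1) ≤ biasFactor X l (ghat l)))) :
    biasFactor X lam1 (ghat lam1) ≤
      max (Λ.min' hΛne / Real.sqrt (tauTildeSq X (ghat (Λ.min' hΛne))))
        ((1 / Real.sqrt n) * Real.sqrt ((1 / n) * sqNorm (col0 X))) := by
  rcases hrule with ⟨-, rfl⟩ | ⟨ls, hls, hfls, -, -, -, hopt⟩
  · have hmin := Λ.min'_mem hΛne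
    exact le_max_of_le_left <|
      (hsol _ hmin).biasFactor_le (by omega) (hΛpos _ hmin).le (hτpos _ hmin)
  · have hτCV : tauTildeSq X (ghat lamCV) ≤ (1 / n) * sqNorm (col0 X) := by
      rw [← tauTildeSq_zero, ← hzero]
      exact hmono _ hCV _ (Λ.max'_mem hΛne) (Λ.le_max' _ hCV)
    refine le_max_of_le_right ?_
    calc biasFactor X lam1 (ghat lam1)
        ≤ biasFactor X ls (ghat ls) :=
          hopt ls hls (le_mul_of_one_le_left (Real.sqrt_nonneg _) (by norm_num))
      _ ≤ Real.sqrt (tauTildeSq X (ghat lamCV)) / Real.sqrt n := hfls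
      _ ≤ Real.sqrt ((1 / n) * sqNorm (col0 X)) / Real.sqrt n := by gcongr
      _ = _ := (one_div_mul_eq_div _ _).symm

/-- the tuning parameter `λ₁` selected by the STPS rule satisfies
`f(λ₁) ≤ max{ λ_min/τ̃(λ_min), (1/√n)·((1/n)‖X₁‖²)^{1/2} }`. -/
theorem statement16 (n p : ℕ) (hn : 1 ≤ n) (hp : 2 ≤ p)
    (X : Fin n → Fin p → ℝ)
    (Λ : Finset ℝ) (hΛne : Λ.Nonempty) (hΛpos : ∀ l ∈ Λ, 0 < l)
    (ghat : ℝ → Fin (p - 1) → ℝ)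
    (hsol : ∀ l ∈ Λ, IsNodewiseSol X l (ghat l))
    (hτpos : ∀ l ∈ Λ, 0 < tauTildeSq X (ghat l))
    (hmax : Λ.max' hΛne = ⨆ j : Fin (p - 1), |∑ i, X i (colIdx j) * col0 X i| / n)
    (hmono : ∀ l ∈ Λ, ∀ m ∈ Λ, l ≤ m →
      tauTildeSq X (ghat l) ≤ tauTildeSq X (ghat m))
    (hzero : ghat (Λ.max' hΛne) = 0)
    (lamCV : ℝ) (hCV : lamCV ∈ Λ)
    (lam1 : ℝ)
    (hrule :
      ((∀ l ∈ Λ, Real.sqrt (tauTildeSq X (ghat lamCV)) / Real.sqrt n <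
          biasFactor X l (ghat l)) ∧ lam1 = Λ.min' hΛne) ∨
      (∃ ls ∈ Λ,
        biasFactor X ls (ghat ls) ≤
          Real.sqrt (tauTildeSq X (ghat lamCV)) / Real.sqrt n ∧
        (∀ l ∈ Λ,
          biasFactor X l (ghat l) ≤
            Real.sqrt (tauTildeSq X (ghat lamCV)) / Real.sqrt n →
          Real.sqrt (omegaHat X ls (ghat ls)) ≤ Real.sqrt (omegaHat X l (ghat l))) ∧
        lam1 ∈ Λ ∧
        Real.sqrt (omegaHat X lam1 (ghat lam1)) ≤
          1.1 * Real.sqrt (omegaHat X ls (ghat ls)) ∧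
        (∀ l ∈ Λ,
          Real.sqrt (omegaHat X l (ghat l)) ≤
            1.1 * Real.sqrt (omegaHat X ls (ghat ls)) →
          biasFactor X lam1 (ghat lam1) ≤ biasFactor X l (ghat l)))) :
    biasFactor X lam1 (ghat lam1) ≤
      max (Λ.min' hΛne / Real.sqrt (tauTildeSq X (ghat (Λ.min' hΛne))))
        ((1 / Real.sqrt n) * Real.sqrt ((1 / n) * sqNorm (col0 X))) :=
  statement16_general n p hp X Λ hΛne hΛpos ghat hsol hτpos hmono hzero lamCV hCV lam1 hrule

end
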